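/- (Filtered back projection formula) Let f : ℝ² → ℝ be continuous and integrable with integrable two-dimensional Fourier transform 𝓕f. Then for every x = (x₁, x₂) ∈ ℝ², the function (ϑ, S) ↦ |S| · 𝓕(Rf(ϑ, ·))(S) · e^{2πi S (x₁ cos ϑ + x₂ sin ϑ)} is integrable on (−π, π) × ℝ and f(x) = (1/2) ∫_{−π}^{π} ∫_ℝ |S| · 𝓕(Rf(ϑ, ·))(S) · e^{2πi S (x₁ cos ϑ + x₂ sin ϑ)} dS dϑ. -/

import Mathlib

noncomputable section
open MeasureTheory

def radon (f : ℝ × ℝ → ℝ) (θ t : ℝ) : ℝ :=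
  ∫ s : ℝ, f (t * Real.cos θ - s * Real.sin θ, t * Real.sin θ + s * Real.cos θ)

open Real in
def fourier2 (f : ℝ × ℝ → ℝ) (ξ : ℝ × ℝ) : ℂ :=
  ∫ x : ℝ × ℝ, (f x : ℂ) * Complex.exp (-2 * π * Complex.I * (x.1 * ξ.1 + x.2 * ξ.2))

open Real in
def fourier1 (g : ℝ → ℝ) (S : ℝ) : ℂ :=
  ∫ t : ℝ, (g t : ℂ) * Complex.exp (-2 * π * Complex.I * t * S)

open Real Set

def rotEquiv (θ : ℝ) : (ℝ × ℝ) ≃ᵐ (ℝ × ℝ) :=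
  (Complex.measurableEquivRealProd.symm.trans
    (rotation (Circle.exp θ)).toHomeomorph.toMeasurableEquiv).trans Complex.measurableEquivRealProd

lemma rotEquiv_apply (θ : ℝ) (p : ℝ × ℝ) :
    rotEquiv θ p = (p.1 * cos θ - p.2 * sin θ, p.1 * sin θ + p.2 * cos θ) := by
  simp [rotEquiv, rotation_apply, Circle.coe_exp, Complex.exp_mul_I, Complex.ext_iff,
    Complex.mul_re, Complex.mul_im, Complex.cos_ofReal_re, Complex.sin_ofReal_re]
  constructor <;> ring

lemma rotEquiv_mp (θ : ℝ) : MeasurePreserving (rotEquiv θ) :=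
  (Complex.volume_preserving_equiv_real_prod.comp
    (((rotation (Circle.exp θ)).measurePreserving).comp
      Complex.volume_preserving_equiv_real_prod.symm))

lemma my_integral_ofReal {α : Type*} [MeasurableSpace α] {μ : Measure α} {f : α → ℝ} :
    ∫ x, ((f x : ℝ) : ℂ) ∂μ = ((∫ x, f x ∂μ : ℝ) : ℂ) := by
  exact _root_.integral_ofReal

lemma norm_exp_I_mul (r : ℝ) : ‖Complex.exp (-2 * π * Complex.I * r)‖ = 1 := by
  rw [Complex.norm_exp]
  have : (-2 * (π:ℂ) * Complex.I * r).re = 0 := by simp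
  rw [this, Real.exp_zero]

lemma radon_slice (f : ℝ × ℝ → ℝ) (hf : Integrable f) (θ S : ℝ) :
    fourier1 (radon f θ) S = fourier2 f (S * Real.cos θ, S * Real.sin θ) := by
  have hmp := rotEquiv_mp θ
  have hemb : MeasurableEmbedding (rotEquiv θ) := (rotEquiv θ).measurableEmbedding
  have hfφ : Integrable (fun p : ℝ × ℝ => f (rotEquiv θ p)) :=
    (hmp.integrable_comp_emb hemb).2 hf
  set H : ℝ × ℝ → ℂ := fun p => Complex.exp (-2 * π * Complex.I * p.1 * S) * (f (rotEquiv θ p) : ℂ)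
    with hHdef
  set G : ℝ × ℝ → ℂ := fun q => (f q : ℂ) *
    Complex.exp (-2 * π * Complex.I * (q.1 * ((S * Real.cos θ : ℝ) : ℂ) + q.2 * ((S * Real.sin θ : ℝ) : ℂ)))
    with hGdef
  have hHint : Integrable H := by
    apply Integrable.bdd_mul (c := 1) hfφ.ofReal
    · exact (Complex.continuous_exp.comp (by fun_prop)).aestronglyMeasurable
    · refine Filter.Eventually.of_forall (fun p => le_of_eq ?_)
      rw [show (-2*(π:ℂ)*Complex.I*(p.1:ℂ)*(S:ℂ)) = -2*π*Complex.I*((p.1*S : ℝ):ℂ) by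
        push_cast; ring]
      exact norm_exp_I_mul _
  have hGH : ∀ p : ℝ × ℝ, G (rotEquiv θ p) = H p := by
    intro p
    rw [rotEquiv_apply]
    simp only [H, G]
    rw [rotEquiv_apply, mul_comm]
    congr 2
    have hcs : Complex.sin (θ:ℂ)^2 + Complex.cos (θ:ℂ)^2 = 1 := Complex.sin_sq_add_cos_sq _
    push_cast
    linear_combination (-2*π*Complex.I*p.1*S) * hcs
  calc fourier1 (radon f θ) S
      = ∫ t : ℝ, Complex.exp (-2 * π * Complex.I * t * S) * ((radon f θ t : ℝ) : ℂ) := by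
        unfold fourier1; congr 1; ext t; ring
    _ = ∫ t : ℝ, ∫ s : ℝ, H (t, s) := by
        congr 1; ext t
        have hrw : (fun s : ℝ => H (t, s)) = fun s : ℝ =>
            Complex.exp (-2 * π * Complex.I * t * S) *
              (f (t * Real.cos θ - s * Real.sin θ, t * Real.sin θ + s * Real.cos θ) : ℂ) := by
          funext s
          simp only [H]
          rw [rotEquiv_apply]
        rw [hrw, integral_const_mul, my_integral_ofReal]
        rfl
    _ = ∫ p : ℝ × ℝ, H p := by
        rw [MeasureTheory.Measure.volume_eq_prod] at hHint ⊢
        have hHint' : Integrable (fun z : ℝ × ℝ => H (z.1, z.2)) (volume.prod volume) := by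
          simpa using hHint
        rw [MeasureTheory.integral_integral hHint']
    _ = ∫ p : ℝ × ℝ, G (rotEquiv θ p) := by simp_rw [hGH]
    _ = ∫ q : ℝ × ℝ, G q := hmp.integral_comp hemb G
    _ = fourier2 f (S * Real.cos θ, S * Real.sin θ) := rfl

open FourierTransform in
open scoped RealInnerProductSpace in
lemma complex_inner (z w : ℂ) : ⟪z, w⟫ = z.re * w.re + z.im * w.im := by
  simp [real_inner_eq_re_inner (𝕜 := ℂ), RCLike.inner_apply]
  ring

open FourierTransform in
open scoped RealInnerProductSpace in
lemma fourier2_pointwise (f : ℝ × ℝ → ℝ) (w : ℂ) :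
    𝓕 (fun z : ℂ => (f (z.re, z.im) : ℂ)) w = fourier2 f (w.re, w.im) := by
  rw [Real.fourier_eq']
  have hcv := (MeasurePreserving.symm Complex.measurableEquivRealProd
      Complex.volume_preserving_equiv_real_prod).integral_comp
    Complex.measurableEquivRealProd.symm.measurableEmbedding
    (fun z : ℂ => Complex.exp (↑(-2 * π * ⟪z, w⟫) * Complex.I) • (f (z.re, z.im) : ℂ))
  rw [← hcv]
  unfold fourier2
  congr 1
  funext ξ
  have h1 : ∀ p : ℝ × ℝ, (Complex.measurableEquivRealProd.symm p).re = p.1 := fun _ => rfl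
  have h2 : ∀ p : ℝ × ℝ, (Complex.measurableEquivRealProd.symm p).im = p.2 := fun _ => rfl
  have harg : ((-2 * π * ⟪Complex.measurableEquivRealProd.symm ξ, w⟫ : ℝ) : ℂ) * Complex.I
      = -2 * π * Complex.I * ((ξ.1 : ℂ) * (((w.re, w.im) : ℝ × ℝ).1 : ℂ) +
        (ξ.2 : ℂ) * (((w.re, w.im) : ℝ × ℝ).2 : ℂ)) := by
    rw [complex_inner, h1, h2]
    push_cast
    ring
  rw [smul_eq_mul, mul_comm, harg]
  rfl

open FourierTransform in
open scoped RealInnerProductSpace in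
lemma inversion (f : ℝ × ℝ → ℝ) (hc : Continuous f) (hf : Integrable f)
    (hFf : Integrable (fourier2 f)) (x : ℝ × ℝ) :
    Integrable (fun ξ : ℝ × ℝ => fourier2 f ξ *
      Complex.exp (2 * π * Complex.I * (x.1 * ξ.1 + x.2 * ξ.2))) ∧
    (f x : ℂ) = ∫ ξ : ℝ × ℝ, fourier2 f ξ *
      Complex.exp (2 * π * Complex.I * (x.1 * ξ.1 + x.2 * ξ.2)) := by
  have hmp := Complex.volume_preserving_equiv_real_prod
  have hemb := Complex.measurableEquivRealProd.measurableEmbedding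
  set F : ℂ → ℂ := fun z => (f (z.re, z.im) : ℂ) with hFdef
  have hF : Integrable F := by
    have : Integrable (fun z : ℂ => f (Complex.measurableEquivRealProd z)) :=
      (hmp.integrable_comp_emb hemb).2 hf
    exact this.ofReal
  have hFc : Continuous F := Complex.continuous_ofReal.comp
    (hc.comp (Complex.continuous_re.prodMk Complex.continuous_im))
  have h𝓕F : 𝓕 F = fun w : ℂ => fourier2 f (w.re, w.im) := funext (fourier2_pointwise f)
  have h𝓕int : Integrable (𝓕 F) := by
    rw [h𝓕F]
    exact (hmp.integrable_comp_emb hemb).2 hFf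
  have hexp_norm : ∀ ξ : ℝ × ℝ,
      ‖Complex.exp (2 * π * Complex.I * (x.1 * ξ.1 + x.2 * ξ.2))‖ = 1 := by
    intro ξ
    rw [Complex.norm_exp]
    have : (2 * (π:ℂ) * Complex.I * (x.1 * ξ.1 + x.2 * ξ.2)).re = 0 := by simp
    rw [this, Real.exp_zero]
  constructor
  · have h1 : Integrable (fun ξ : ℝ × ℝ =>
        Complex.exp (2 * π * Complex.I * (x.1 * ξ.1 + x.2 * ξ.2)) * fourier2 f ξ) := by
      apply Integrable.bdd_mul (c := 1) hFf
      · apply Continuous.aestronglyMeasurable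
        exact Complex.continuous_exp.comp (by fun_prop)
      · exact Filter.Eventually.of_forall (fun ξ => le_of_eq (hexp_norm ξ))
    exact h1.congr (Filter.Eventually.of_forall fun ξ => mul_comm _ _)
  · have hinv : 𝓕⁻ (𝓕 F) = F := hFc.fourierInv_fourier_eq hF h𝓕int
    have hx : (f x : ℂ) = F (Complex.measurableEquivRealProd.symm x) := by
      simp [F]
    rw [hx, ← hinv, Real.fourierInv_eq']
    have hcv := (MeasurePreserving.symm Complex.measurableEquivRealProd hmp).integral_comp
      Complex.measurableEquivRealProd.symm.measurableEmbedding
      (fun w : ℂ => Complex.exp (↑(2 * π * ⟪w, Complex.measurableEquivRealProd.symm x⟫) *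
        Complex.I) • 𝓕 F w)
    rw [← hcv]
    congr 1
    funext ξ
    have h1 : ∀ p : ℝ × ℝ, (Complex.measurableEquivRealProd.symm p).re = p.1 := fun _ => rfl
    have h2 : ∀ p : ℝ × ℝ, (Complex.measurableEquivRealProd.symm p).im = p.2 := fun _ => rfl
    have harg : ((2 * π * ⟪Complex.measurableEquivRealProd.symm ξ,
        Complex.measurableEquivRealProd.symm x⟫ : ℝ) : ℂ) * Complex.I
        = 2 * π * Complex.I * ((x.1 : ℂ) * (ξ.1 : ℂ) + (x.2 : ℂ) * (ξ.2 : ℂ)) := by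
      rw [complex_inner, h1, h2, h1, h2]
      push_cast
      ring
    rw [smul_eq_mul, mul_comm, harg, h𝓕F]
    rfl

lemma swap_mp : MeasurePreserving (Prod.swap : ℝ × ℝ → ℝ × ℝ) volume volume := by
  rw [MeasureTheory.Measure.volume_eq_prod]
  exact Measure.measurePreserving_swap

lemma swap_emb : MeasurableEmbedding (Prod.swap : ℝ × ℝ → ℝ × ℝ) :=
  MeasurableEquiv.prodComm.measurableEmbedding

lemma polar_pos_integral (g : ℝ × ℝ → ℂ) :
    ∫ p in Ioo (-π) π ×ˢ Ioi (0:ℝ), |p.2| • g (p.2 * cos p.1, p.2 * sin p.1) = ∫ q, g q := by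
  have h1 := swap_mp.setIntegral_preimage_emb swap_emb
    (fun q : ℝ × ℝ => |q.1| • g (q.1 * cos q.2, q.1 * sin q.2)) (Ioi (0:ℝ) ×ˢ Ioo (-π) π)
  rw [Set.preimage_swap_prod] at h1
  simp only [Prod.fst_swap, Prod.snd_swap] at h1
  calc ∫ p in Ioo (-π) π ×ˢ Ioi (0:ℝ), |p.2| • g (p.2 * cos p.1, p.2 * sin p.1)
      = ∫ q in Ioi (0:ℝ) ×ˢ Ioo (-π) π, |q.1| • g (q.1 * cos q.2, q.1 * sin q.2) := h1
    _ = ∫ q in polarCoord.target, q.1 • g (polarCoord.symm q) := by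
        rw [polarCoord_target]
        apply setIntegral_congr_fun
          ((measurableSet_Ioi).prod measurableSet_Ioo)
        intro q hq
        show |q.1| • g (q.1 * cos q.2, q.1 * sin q.2) = q.1 • g (polarCoord.symm q)
        rw [polarCoord_symm_apply, abs_of_pos (Set.mem_Ioi.1 hq.1)]
    _ = ∫ q, g q := integral_comp_polarCoord_symm g

lemma polar_pos_integrable (g : ℝ × ℝ → ℂ) (hg : Integrable g) :
    IntegrableOn (fun p : ℝ × ℝ => |p.2| • g (p.2 * cos p.1, p.2 * sin p.1))
      (Ioo (-π) π ×ˢ Ioi (0:ℝ)) := by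
  set B : ℝ × ℝ → ℝ × ℝ →L[ℝ] ℝ × ℝ := fun p =>
    LinearMap.toContinuousLinearMap (Matrix.toLin (Module.Basis.finTwoProd ℝ) (Module.Basis.finTwoProd ℝ)
      !![cos p.2, -p.1 * sin p.2; sin p.2, p.1 * cos p.2]) with hB
  have hder : ∀ p ∈ polarCoord.target,
      HasFDerivWithinAt polarCoord.symm (B p) polarCoord.target p :=
    fun p _ => (hasFDerivAt_polarCoord_symm p).hasFDerivWithinAt
  have hdet : ∀ p : ℝ × ℝ, (B p).det = p.1 := by
    intro p
    conv_rhs => rw [← one_mul p.1, ← cos_sq_add_sin_sq p.2]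
    simp only [B, neg_mul, LinearMap.det_toContinuousLinearMap, LinearMap.det_toLin,
      Matrix.det_fin_two_of, sub_neg_eq_add]
    ring
  have hinj : Set.InjOn polarCoord.symm polarCoord.target := polarCoord.symm.injOn
  have h0 : IntegrableOn g (polarCoord.symm '' polarCoord.target) := by
    rw [polarCoord.symm_image_target_eq_source]
    exact hg.integrableOn
  have h1 : IntegrableOn (fun p => |(B p).det| • g (polarCoord.symm p)) polarCoord.target :=
    (integrableOn_image_iff_integrableOn_abs_det_fderiv_smul volume
      polarCoord.open_target.measurableSet hder hinj g).1 h0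
  have h2 : IntegrableOn (fun q : ℝ × ℝ => |q.1| • g (q.1 * cos q.2, q.1 * sin q.2))
      polarCoord.target := by
    apply h1.congr_fun _ polarCoord.open_target.measurableSet
    intro q _
    show |(B q).det| • g (polarCoord.symm q) = |q.1| • g (q.1 * cos q.2, q.1 * sin q.2)
    rw [hdet, polarCoord_symm_apply]
  rw [polarCoord_target] at h2
  have h3 := (swap_mp.integrableOn_comp_preimage swap_emb).2 h2
  rw [Set.preimage_swap_prod] at h3
  exact h3.congr_fun
    (fun p _ => by simp only [Function.comp_apply, Prod.fst_swap, Prod.snd_swap])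
    ((measurableSet_Ioo).prod measurableSet_Ioi)

lemma negSnd_mp : MeasurePreserving (fun p : ℝ × ℝ => (p.1, -p.2)) volume volume := by
  rw [MeasureTheory.Measure.volume_eq_prod]
  exact (MeasurePreserving.id volume).prod (Measure.measurePreserving_neg volume)

lemma negSnd_emb : MeasurableEmbedding (fun p : ℝ × ℝ => (p.1, -p.2)) :=
  ((MeasurableEquiv.refl ℝ).prodCongr (Homeomorph.neg ℝ).toMeasurableEquiv).measurableEmbedding

lemma polar_full (g : ℝ × ℝ → ℂ) (hg : Integrable g) :
    IntegrableOn (fun p : ℝ × ℝ => |p.2| • g (p.2 * cos p.1, p.2 * sin p.1))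
      (Ioo (-π) π ×ˢ (Set.univ : Set ℝ)) ∧
    ∫ p in Ioo (-π) π ×ˢ (Set.univ : Set ℝ), |p.2| • g (p.2 * cos p.1, p.2 * sin p.1)
      = 2 * ∫ q, g q := by
  set g' : ℝ × ℝ → ℂ := fun ξ => g (-ξ) with hg'def
  have hgneg : Integrable g' :=
    ((Measure.measurePreserving_neg (volume : Measure (ℝ × ℝ))).integrable_comp_emb
      (MeasurableEquiv.neg (ℝ × ℝ)).measurableEmbedding).2 hg
  have hintg' : ∫ q, g' q = ∫ q, g q := integral_neg_eq_self g volume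
  have hcomp : ∀ p : ℝ × ℝ,
      ((fun p : ℝ × ℝ => |p.2| • g' (p.2 * cos p.1, p.2 * sin p.1)) ∘
        (fun p : ℝ × ℝ => (p.1, -p.2))) p
      = |p.2| • g (p.2 * cos p.1, p.2 * sin p.1) := by
    intro p
    show |(-p.2)| • g' ((-p.2) * cos p.1, (-p.2) * sin p.1) = _
    rw [abs_neg]
    congr 1
    show g (-((-p.2) * cos p.1, (-p.2) * sin p.1)) = _
    congr 1
    rw [Prod.neg_mk, Prod.mk.injEq]
    constructor <;> ring
  have hpre : (fun p : ℝ × ℝ => (p.1, -p.2)) ⁻¹' (Ioo (-π) π ×ˢ Ioi (0:ℝ))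
      = Ioo (-π) π ×ˢ Iio (0:ℝ) := by
    ext ⟨a, b⟩
    simp only [Set.mem_preimage, Set.mem_prod, Set.mem_Ioi, Set.mem_Iio]
    exact and_congr Iff.rfl (by constructor <;> intro h <;> linarith)
  have hnegInt : IntegrableOn (fun p : ℝ × ℝ => |p.2| • g (p.2 * cos p.1, p.2 * sin p.1))
      (Ioo (-π) π ×ˢ Iio (0:ℝ)) := by
    have h := (negSnd_mp.integrableOn_comp_preimage negSnd_emb).2 (polar_pos_integrable g' hgneg)
    rw [hpre] at h
    exact h.congr_fun (fun p _ => hcomp p) ((measurableSet_Ioo).prod measurableSet_Iio)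
  have hnegVal : ∫ p in Ioo (-π) π ×ˢ Iio (0:ℝ), |p.2| • g (p.2 * cos p.1, p.2 * sin p.1)
      = ∫ q, g q := by
    have h := negSnd_mp.setIntegral_preimage_emb negSnd_emb
      (fun p : ℝ × ℝ => |p.2| • g' (p.2 * cos p.1, p.2 * sin p.1)) (Ioo (-π) π ×ˢ Ioi (0:ℝ))
    rw [hpre] at h
    calc ∫ p in Ioo (-π) π ×ˢ Iio (0:ℝ), |p.2| • g (p.2 * cos p.1, p.2 * sin p.1)
        = ∫ p in Ioo (-π) π ×ˢ Iio (0:ℝ),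
            ((fun p : ℝ × ℝ => |p.2| • g' (p.2 * cos p.1, p.2 * sin p.1)) ∘
              (fun p : ℝ × ℝ => (p.1, -p.2))) p := by
          apply setIntegral_congr_fun ((measurableSet_Ioo).prod measurableSet_Iio)
          exact fun p _ => (hcomp p).symm
      _ = ∫ p in Ioo (-π) π ×ˢ Ioi (0:ℝ), |p.2| • g' (p.2 * cos p.1, p.2 * sin p.1) := h
      _ = ∫ q, g' q := polar_pos_integral g'
      _ = ∫ q, g q := hintg'
  have hposInt := polar_pos_integrable g hg
  have hposVal := polar_pos_integral g
  have hdisj : Disjoint (Ioo (-π) π ×ˢ Iio (0:ℝ)) (Ioo (-π) π ×ˢ Ioi (0:ℝ)) := by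
    rw [Set.disjoint_left]
    rintro ⟨a, b⟩ ⟨_, h1⟩ ⟨_, h2⟩
    exact absurd (Set.mem_Ioi.1 h2) (not_lt.2 (le_of_lt (Set.mem_Iio.1 h1)))
  have hunionInt := hnegInt.union hposInt
  set Bset : Set (ℝ × ℝ) := (Ioo (-π) π ×ˢ Iio (0:ℝ)) ∪ (Ioo (-π) π ×ˢ Ioi (0:ℝ)) with hBset
  have haeset : (Ioo (-π) π ×ˢ (Set.univ : Set ℝ)) =ᵐ[volume] Bset := by
    have hsub : (Ioo (-π) π ×ˢ (Set.univ : Set ℝ)) \ Bset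
        ⊆ (Set.univ : Set ℝ) ×ˢ ({0} : Set ℝ) := by
      rintro ⟨a, b⟩ ⟨⟨ha, -⟩, hb⟩
      refine ⟨Set.mem_univ _, ?_⟩
      simp only [Bset, Set.mem_union, Set.mem_prod, Set.mem_Iio, Set.mem_Ioi, not_or,
        not_and] at hb
      have h1 := hb.1 ha
      have h2 := hb.2 ha
      simp only [Set.mem_singleton_iff]
      linarith [not_lt.1 h1, not_lt.1 h2]
    have hnull : volume ((Set.univ : Set ℝ) ×ˢ ({0} : Set ℝ)) = 0 := by
      rw [MeasureTheory.Measure.volume_eq_prod, Measure.prod_prod]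
      simp
    have hsub2 : Bset \ (Ioo (-π) π ×ˢ (Set.univ : Set ℝ)) = ∅ := by
      apply Set.diff_eq_empty.2
      apply Set.union_subset <;> exact Set.prod_mono_right (Set.subset_univ _)
    rw [MeasureTheory.ae_eq_set]
    exact ⟨measure_mono_null hsub hnull, by rw [hsub2]; simp⟩
  constructor
  · unfold IntegrableOn
    rw [Measure.restrict_congr_set haeset]
    exact hunionInt
  · rw [MeasureTheory.setIntegral_congr_set haeset,
      MeasureTheory.setIntegral_union hdisj ((measurableSet_Ioo).prod measurableSet_Ioi)
        hnegInt hposInt, hnegVal, hposVal, two_mul]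

open Real in
theorem filtered_back_projection_formula
    (f : ℝ × ℝ → ℝ) (hc : Continuous f) (hf : Integrable f)
    (hFf : Integrable (fourier2 f)) (x : ℝ × ℝ) :
    IntegrableOn
      (fun p : ℝ × ℝ => ((|p.2| : ℝ) : ℂ) * fourier1 (fun t => radon f p.1 t) p.2 *
        Complex.exp (2 * π * Complex.I * p.2 * (x.1 * Real.cos p.1 + x.2 * Real.sin p.1)))
      (Set.Ioo (-π) π ×ˢ (Set.univ : Set ℝ)) ∧
    (f x : ℂ) = (1 / 2) *
      ∫ θ in Set.Ioo (-π) π, ∫ S : ℝ,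
        ((|S| : ℝ) : ℂ) * fourier1 (fun t => radon f θ t) S *
          Complex.exp (2 * π * Complex.I * S * (x.1 * Real.cos θ + x.2 * Real.sin θ)) := by
  set g : ℝ × ℝ → ℂ := fun ξ => fourier2 f ξ *
      Complex.exp (2 * π * Complex.I * (x.1 * ξ.1 + x.2 * ξ.2)) with hgdef
  obtain ⟨hgint, hval⟩ := inversion f hc hf hFf x
  have hpt : ∀ θ S : ℝ, ((|S| : ℝ) : ℂ) * fourier1 (fun t => radon f θ t) S *
      Complex.exp (2 * π * Complex.I * S * (x.1 * Real.cos θ + x.2 * Real.sin θ))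
      = |S| • g (S * cos θ, S * sin θ) := by
    intro θ S
    have hsl : fourier1 (fun t => radon f θ t) S = fourier2 f (S * cos θ, S * sin θ) :=
      radon_slice f hf θ S
    rw [hsl, Complex.real_smul]
    simp only [g]
    rw [mul_assoc]
    congr 2
    push_cast
    ring
  have hfun : (fun p : ℝ × ℝ => ((|p.2| : ℝ) : ℂ) * fourier1 (fun t => radon f p.1 t) p.2 *
      Complex.exp (2 * π * Complex.I * p.2 * (x.1 * Real.cos p.1 + x.2 * Real.sin p.1)))
      = fun p : ℝ × ℝ => |p.2| • g (p.2 * cos p.1, p.2 * sin p.1) :=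
    funext fun p => hpt p.1 p.2
  obtain ⟨hA, hB⟩ := polar_full g hgint
  constructor
  · rw [hfun]
    exact hA
  · have hA' : IntegrableOn (fun p : ℝ × ℝ => |p.2| • g (p.2 * cos p.1, p.2 * sin p.1))
        (Ioo (-π) π ×ˢ (Set.univ : Set ℝ)) (volume.prod volume) := by
      rw [← MeasureTheory.Measure.volume_eq_prod]
      exact hA
    have hps := MeasureTheory.setIntegral_prod
      (fun p : ℝ × ℝ => |p.2| • g (p.2 * cos p.1, p.2 * sin p.1)) hA'
    calc (f x : ℂ) = ∫ q, g q := hval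
      _ = (1 / 2) * (2 * ∫ q, g q) := by ring
      _ = (1 / 2) * ∫ p in Ioo (-π) π ×ˢ (Set.univ : Set ℝ),
            |p.2| • g (p.2 * cos p.1, p.2 * sin p.1) := by rw [hB]
      _ = (1 / 2) * ∫ θ in Ioo (-π) π, ∫ S in (Set.univ : Set ℝ),
            |S| • g (S * cos θ, S * sin θ) := by
          rw [MeasureTheory.Measure.volume_eq_prod, hps]
      _ = (1 / 2) * ∫ θ in Set.Ioo (-π) π, ∫ S : ℝ,
            ((|S| : ℝ) : ℂ) * fourier1 (fun t => radon f θ t) S *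
              Complex.exp (2 * π * Complex.I * S * (x.1 * Real.cos θ + x.2 * Real.sin θ)) := by
          rw [Measure.restrict_univ]
          simp_rw [hpt]
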